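/- arXiv:1210.2676 — 6 statements merged into one kernel-verified Lean document; each statement's English description precedes it below -/
import Mathlib

section
/- Let λ, λ' > 1 and a ≥ 1 be real numbers. If for all positive integers n, (λ')^(n/2) + (λ')^(-n/2) ≤ (λ^(n/2) + λ^(-n/2))^a, then λ' ≤ λ^a. -/
/-! Bounding `λ'^(-n/2)` below by `0` and `λ^(-n/2)` above by `λ^(n/2)` turns the hypothesis into
`√λ' ^ n ≤ 2^a * √(λ^a) ^ n` for every `n > 0`; a geometric sequence bounded by a constant
cannot have ratio `> 1`, so `√λ' ≤ √(λ^a)`. -/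

open Filter

theorem le_of_forall_pow_le_mul_pow {x y C : ℝ} (hy : 0 < y)
    (h : ∀ n : ℕ, 0 < n → x ^ n ≤ C * y ^ n) : x ≤ y := by
  by_contra! hyx
  have hratio : 1 < x / y := (one_lt_div hy).2 hyx
  obtain ⟨n, hCn, hn⟩ :=
    (((tendsto_pow_atTop_atTop_of_one_lt hratio).eventually_gt_atTop C).and
      (eventually_gt_atTop 0)).exists
  have : (x / y) ^ n ≤ C := by
    rw [div_pow, div_le_iff₀ (pow_pos hy n)]
    exact h n hn
  linarith

theorem Real.rpow_natCast_div_two {x : ℝ} (hx : 0 ≤ x) (n : ℕ) :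
    x ^ ((n : ℝ) / 2) = √x ^ n := by
  rw [Real.sqrt_eq_rpow, ← Real.rpow_natCast, ← Real.rpow_mul hx]
  ring_nf

theorem Real.rpow_add_rpow_neg_rpow_le {x t a : ℝ} (hx : 1 ≤ x) (ht : 0 ≤ t) (ha : 0 ≤ a) :
    (x ^ t + x ^ (-t)) ^ a ≤ 2 ^ a * (x ^ a) ^ t := by
  have hx₀ : 0 ≤ x := zero_le_one.trans hx
  have hneg : x ^ (-t) ≤ x ^ t := Real.rpow_le_rpow_of_exponent_le hx (by linarith)
  calc (x ^ t + x ^ (-t)) ^ a ≤ (2 * x ^ t) ^ a := by gcongr; linarith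
    _ = 2 ^ a * (x ^ a) ^ t := by
      rw [Real.mul_rpow zero_le_two (by positivity), ← Real.rpow_mul hx₀,
        ← Real.rpow_mul hx₀, mul_comm t]

/-- If `λ, λ' > 1`, `a ≥ 1` and for all positive integers `n`,
`(λ')^(n/2) + (λ')^(-n/2) ≤ (λ^(n/2) + λ^(-n/2))^a`, then `λ' ≤ λ^a`. -/
theorem multiplier_le_of_trace_pow_le (lam lam' a : ℝ)
    (hlam : 1 < lam) (hlam' : 1 < lam') (ha : 1 ≤ a)
    (h : ∀ n : ℕ, 0 < n →
      lam' ^ ((n : ℝ)/2) + lam' ^ (-((n : ℝ)/2)) ≤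
        (lam ^ ((n : ℝ)/2) + lam ^ (-((n : ℝ)/2))) ^ a) :
    lam' ≤ lam ^ a := by
  have hlam₀ : 0 < lam := zero_lt_one.trans hlam
  have hlam'₀ : 0 ≤ lam' := zero_le_one.trans hlam'.le
  have hpow : 0 < lam ^ a := Real.rpow_pos_of_pos hlam₀ a
  suffices √lam' ≤ √(lam ^ a) from (Real.sqrt_le_sqrt_iff hpow.le).1 this
  refine le_of_forall_pow_le_mul_pow (C := 2 ^ a) (Real.sqrt_pos.2 hpow) fun n hn => ?_
  rw [← Real.rpow_natCast_div_two hlam'₀, ← Real.rpow_natCast_div_two hpow.le]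
  calc lam' ^ ((n : ℝ) / 2)
      ≤ lam' ^ ((n : ℝ) / 2) + lam' ^ (-((n : ℝ) / 2)) :=
        le_add_of_nonneg_right (Real.rpow_nonneg hlam'₀ _)
    _ ≤ (lam ^ ((n : ℝ) / 2) + lam ^ (-((n : ℝ) / 2))) ^ a := h n hn
    _ ≤ 2 ^ a * (lam ^ a) ^ ((n : ℝ) / 2) :=
        Real.rpow_add_rpow_neg_rpow_le hlam.le (by positivity) (zero_le_one.trans ha)
end

section
/- Let λ, λ' > 1 and a ≥ 1 be real numbers. If λ' ≤ λ^a, then (λ')^(1/2) + (λ')^(-1/2) ≤ (λ^(1/2) + λ^(-1/2))^a. -/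
/-! With `t = λ^(1/2)` the right-hand side is `(t + t⁻¹)^a`, which dominates `t^a + t^(-a)` by
superadditivity of `x ↦ x^a` for `a ≥ 1`. Since `x ↦ x + x⁻¹` is increasing on `[1, ∞)` and
`1 ≤ λ'^(1/2) ≤ t^a`, the left-hand side is at most `t^a + t^(-a)`. -/

lemma add_inv_le_add_inv_of_one_le {u v : ℝ} (hu : 1 ≤ u) (huv : u ≤ v) :
    u + u⁻¹ ≤ v + v⁻¹ := by
  have hv : 0 < v := by linarith
  have hinv : (u * v)⁻¹ ≤ 1 := inv_le_one_of_one_le₀ (by nlinarith)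
  have hdiff : v + v⁻¹ - (u + u⁻¹) = (v - u) * (1 - (u * v)⁻¹) := by
    field_simp
    ring
  nlinarith

lemma rpow_add_inv_rpow_le_add_inv_rpow {t a : ℝ} (ht : 0 ≤ t) (ha : 1 ≤ a) :
    t ^ a + (t ^ a)⁻¹ ≤ (t + t⁻¹) ^ a := by
  rw [← Real.inv_rpow ht]
  exact Real.add_rpow_le_rpow_add ht (inv_nonneg.mpr ht) ha

/-- If `λ, λ' > 1`, `a ≥ 1` and `λ' ≤ λ^a`, then
`(λ')^(1/2) + (λ')^(-1/2) ≤ (λ^(1/2) + λ^(-1/2))^a`. -/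
theorem trace_le_of_multiplier_le (lam lam' a : ℝ)
    (hlam : 1 < lam) (hlam' : 1 < lam') (ha : 1 ≤ a)
    (h : lam' ≤ lam ^ a) :
    lam' ^ ((1:ℝ)/2) + lam' ^ (-(1:ℝ)/2) ≤
      (lam ^ ((1:ℝ)/2) + lam ^ (-(1:ℝ)/2)) ^ a := by
  have hneg : ∀ x : ℝ, 0 ≤ x → x ^ (-(1:ℝ)/2) = (x ^ ((1:ℝ)/2))⁻¹ := fun x hx => by
    rw [neg_div, Real.rpow_neg hx]
  have hlam0 : 0 ≤ lam := by linarith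
  have hlam'0 : 0 ≤ lam' := by linarith
  rw [hneg lam' hlam'0, hneg lam hlam0]
  have hroot : lam' ^ ((1:ℝ)/2) ≤ (lam ^ ((1:ℝ)/2)) ^ a := by
    rw [← Real.rpow_mul hlam0, mul_comm, Real.rpow_mul hlam0]
    exact Real.rpow_le_rpow hlam'0 h (by norm_num)
  calc lam' ^ ((1:ℝ)/2) + (lam' ^ ((1:ℝ)/2))⁻¹
      ≤ (lam ^ ((1:ℝ)/2)) ^ a + ((lam ^ ((1:ℝ)/2)) ^ a)⁻¹ :=
        add_inv_le_add_inv_of_one_le (Real.one_le_rpow hlam'.le (by norm_num)) hroot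
    _ ≤ (lam ^ ((1:ℝ)/2) + (lam ^ ((1:ℝ)/2))⁻¹) ^ a :=
        rpow_add_inv_rpow_le_add_inv_rpow (Real.rpow_nonneg hlam0 _) ha
end

section
/- Let h be a parabolic Möbius transformation with fixed point P = P(h) ≠ ∞ and translation vector ω = ω(h) ≠ 0, i.e. 1/(h(z) - P) = 1/(z - P) + ω for all z ≠ P. Let g₀(z) = z + 1. Then h⁻¹ ∘ g₀ ∘ h is parabolic with fixed point (ωP - 1)/ω and translation vector -ω², so that |ω(h⁻¹ ∘ g₀ ∘ h)| = |ω(h)|². -/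
/-- The determinant-one matrix representing the parabolic Möbius transformation
with finite fixed point `P` and translation vector `τ`, i.e.
`z ↦ ((1 + τP)z - τP²)/(τz + 1 - τP)`, which satisfies
`1/(g z - P) = 1/(z - P) + τ`. -/
def mobiusPara (P τ : ℝ) : Matrix (Fin 2) (Fin 2) ℝ :=
  !![1 + τ * P, -(τ * P ^ 2); τ, 1 - τ * P]

/-!
Conjugating the unit translation `z ↦ z + 1` by a unimodular matrix `[[a, b], [c, d]]` gives
`[[1 + cd, d²], [-c², 1 - cd]]`: a parabolic map with translation vector `-c²` whose fixed point `Q`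
is the preimage of `∞`, i.e. `cQ + d = 0`. For `h = mobiusPara P ω` the lower row is
`(ω, 1 - ωP)`, so `Q = (ωP - 1)/ω` and the translation vector is `-ω²`.
-/

theorem inv_mul_translation_mul_eq_mobiusPara {a b c d Q : ℝ} (hdet : a * d - b * c = 1)
    (hQ : c * Q + d = 0) :
    (!![a, b; c, d])⁻¹ * !![1, 1; 0, 1] * !![a, b; c, d] = mobiusPara Q (-c ^ 2) := by
  have hinv : (!![a, b; c, d])⁻¹ = !![d, -b; -c, a] := by
    rw [Matrix.inv_def, Matrix.det_fin_two_of, hdet, Matrix.adjugate_fin_two_of]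
    simp
  rw [hinv, mobiusPara, Matrix.mul_fin_two, Matrix.mul_fin_two]
  simp only [EmbeddingLike.apply_eq_iff_eq, Matrix.vecCons_inj, and_true]
  refine ⟨⟨?_, ?_⟩, ?_, ?_⟩
  · linear_combination hdet + c * hQ
  · linear_combination (d - c * Q) * hQ
  · ring
  · linear_combination hdet - c * hQ

/-- If `h` is parabolic with finite fixed point `P` and translation vector
`ω ≠ 0`, and `g₀(z) = z + 1`, then `h⁻¹ ∘ g₀ ∘ h` is parabolic with fixed point
`(ωP - 1)/ω` and translation vector `-ω²`; in particular
`|ω(h⁻¹ ∘ g₀ ∘ h)| = |ω(h)|²`. -/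
theorem conj_parabolic_translation_vector_sq (P ω : ℝ) (hω : ω ≠ 0) :
    (mobiusPara P ω)⁻¹ * !![1, 1; 0, 1] * mobiusPara P ω =
      mobiusPara ((ω * P - 1) / ω) (-ω ^ 2) ∧
    |(-ω ^ 2 : ℝ)| = |ω| ^ 2 := by
  have hdet : (1 + ω * P) * (1 - ω * P) - -(ω * P ^ 2) * ω = 1 := by ring
  have hfix : ω * ((ω * P - 1) / ω) + (1 - ω * P) = 0 := by
    rw [mul_div_cancel₀ _ hω]
    ring
  exact ⟨inv_mul_translation_mul_eq_mobiusPara hdet hfix, by rw [abs_neg, abs_pow, sq_abs]⟩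
end

section
/- Let g be a parabolic Möbius transformation with finite fixed point and translation vector ω(g) ≠ 0, let g₀(z) = z+1, and define inductively g₁ = g⁻¹ ∘ g₀ ∘ g and gₙ = g_{n-1}⁻¹ ∘ g₀ ∘ g_{n-1}. Then each gₙ is parabolic with |ω(gₙ)| = |ω(g)|^(2ⁿ). -/
/-- The sequence `g₀ = g`, `gₙ = g_{n-1}⁻¹ ∘ g₀ ∘ g_{n-1}` of iterated conjugates
of the translation `g₀(z) = z + 1`. -/
noncomputable def conjSeq (g : Matrix (Fin 2) (Fin 2) ℝ) : ℕ → Matrix (Fin 2) (Fin 2) ℝ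
  | 0 => g
  | n + 1 => (conjSeq g n)⁻¹ * !![1, 1; 0, 1] * conjSeq g n

/-!
Conjugating the unit translation by the parabolic map with fixed point `Q` and translation
vector `τ ≠ 0` gives the parabolic map with fixed point `Q - 1/τ` and translation vector `-τ²`.
Hence the absolute value of the translation vector squares at every step of the sequence, and
it is `|ω| ^ 2ⁿ` after `n` steps.
-/

lemma mobiusPara_inv (Q τ : ℝ) : (mobiusPara Q τ)⁻¹ = mobiusPara Q (-τ) := by
  apply Matrix.inv_eq_left_inv
  rw [mobiusPara, mobiusPara, Matrix.mul_fin_two, Matrix.one_fin_two]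
  ext i j
  fin_cases i <;> fin_cases j <;> simp <;> ring

lemma mobiusPara_inv_mul_translation_mul (Q : ℝ) {τ : ℝ} (hτ : τ ≠ 0) :
    (mobiusPara Q τ)⁻¹ * !![1, 1; 0, 1] * mobiusPara Q τ = mobiusPara (Q - τ⁻¹) (-τ ^ 2) := by
  rw [mobiusPara_inv, mobiusPara, mobiusPara, mobiusPara, Matrix.mul_fin_two, Matrix.mul_fin_two]
  ext i j
  fin_cases i <;> fin_cases j <;> simp <;> field_simp <;> ring

lemma conjSeq_mobiusPara (P : ℝ) {ω : ℝ} (hω : ω ≠ 0) (n : ℕ) :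
    ∃ Q τ : ℝ, τ ≠ 0 ∧ conjSeq (mobiusPara P ω) n = mobiusPara Q τ ∧
      |τ| = |ω| ^ (2 ^ n : ℕ) := by
  induction n with
  | zero => exact ⟨P, ω, hω, rfl, by rw [pow_zero, pow_one]⟩
  | succ n ih =>
    obtain ⟨Q, τ, hτ, hconj, habs⟩ := ih
    refine ⟨Q - τ⁻¹, -τ ^ 2, by simpa using hτ, ?_, ?_⟩
    · rw [conjSeq, hconj, mobiusPara_inv_mul_translation_mul Q hτ]
    · rw [abs_neg, abs_pow, habs, ← pow_mul, pow_succ]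

/-- If `g` is parabolic with finite fixed point `P` and translation vector
`ω ≠ 0`, and `g₁ = g⁻¹ ∘ g₀ ∘ g`, `gₙ = g_{n-1}⁻¹ ∘ g₀ ∘ g_{n-1}`, then each `gₙ` (`n ≥ 1`)
is parabolic with `|ω(gₙ)| = |ω(g)|^(2ⁿ)`. -/
theorem iterated_conjugate_translation_vectors (P ω : ℝ) (hω : ω ≠ 0) :
    ∀ n : ℕ, 1 ≤ n → ∃ Q τ : ℝ, τ ≠ 0 ∧
      (conjSeq (mobiusPara P ω) n = mobiusPara Q τ ∨
       conjSeq (mobiusPara P ω) n = -mobiusPara Q τ) ∧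
      |τ| = |ω| ^ (2 ^ n : ℕ) := by
  intro n _
  obtain ⟨Q, τ, hτ, hconj, habs⟩ := conjSeq_mobiusPara P hω n
  exact ⟨Q, τ, hτ, Or.inl hconj, habs⟩
end

section
/- Let g be a hyperbolic Möbius transformation with attracting fixed point P(g) = 0, repelling fixed point N = N(g) ≠ 0, ∞, and multiplier λ > 1, so that gⁿ(z) = Nz/((1 − λⁿ)z + λⁿN) for n ≥ 1. Let g₀(z) = z + 1. Then for each n ≥ 1, the conjugate gⁿ ∘ g₀ ∘ g⁻ⁿ is parabolic with translation vector ω(gⁿ ∘ g₀ ∘ g⁻ⁿ) = −(λⁿ + λ⁻ⁿ − 2)/N². -/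
/-- Let `g` be hyperbolic with attracting fixed point `0`, repelling fixed
point `N ≠ 0` and multiplier `λ > 1`, so that `gⁿ(z) = Nz/((1 - λⁿ)z + λⁿN)`, represented
by the matrix `!![N, 0; 1 - λⁿ, λⁿ N]`. Let `g₀(z) = z + 1`. Then for each `n ≥ 1` the
conjugate `gⁿ ∘ g₀ ∘ g⁻ⁿ` is parabolic with translation vector `-(λⁿ + λ⁻ⁿ - 2)/N²`. -/
theorem conj_by_hyperbolic_translation_vector (N lam : ℝ) (hN : N ≠ 0) (hlam : 1 < lam) :
    ∀ n : ℕ, 1 ≤ n → ∃ Q : ℝ,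
      (!![N, 0; 1 - lam ^ n, lam ^ n * N] : Matrix (Fin 2) (Fin 2) ℝ) * !![1, 1; 0, 1] *
          (!![N, 0; 1 - lam ^ n, lam ^ n * N])⁻¹ =
        mobiusPara Q (-((lam ^ n + (lam ^ n)⁻¹ - 2) / N ^ 2)) ∨
      (!![N, 0; 1 - lam ^ n, lam ^ n * N] : Matrix (Fin 2) (Fin 2) ℝ) * !![1, 1; 0, 1] *
          (!![N, 0; 1 - lam ^ n, lam ^ n * N])⁻¹ =
        -mobiusPara Q (-((lam ^ n + (lam ^ n)⁻¹ - 2) / N ^ 2)) := by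
  intro n hn
  set m : ℝ := lam ^ n with hm
  have hm1 : 1 < m := one_lt_pow₀ hlam (by omega)
  have hm0 : m ≠ 0 := by positivity
  have hc : (1 : ℝ) - m ≠ 0 := by
    intro h; nlinarith
  have hinv : (!![N, 0; 1 - m, m * N] : Matrix (Fin 2) (Fin 2) ℝ)⁻¹ =
      !![(m*N)/(m*N^2), 0; -(1-m)/(m*N^2), N/(m*N^2)] := by
    apply Matrix.inv_eq_right_inv
    ext i j
    fin_cases i <;> fin_cases j <;>
      simp [Matrix.mul_apply, Fin.sum_univ_two] <;> field_simp <;> ring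
  refine ⟨N / (1 - m), Or.inl ?_⟩
  rw [hinv]
  ext i j
  fin_cases i <;> fin_cases j <;>
    simp [mobiusPara, Matrix.mul_apply, Fin.sum_univ_two] <;> field_simp <;> ring
end

section
/- Let λ > 1, a ≥ 1, and N, N' be nonzero real numbers. For each n ≥ 1 define bₙ by the equation (λ^(an) + λ^(−an) − 2)/(N')² = ((λⁿ + λ⁻ⁿ − 2)/N²)^(bₙ) (assuming both sides exceed 1 for large n so bₙ is well-defined). Then bₙ → a as n → ∞. -/
open Filter Topology Real

/-!
With `μ = λ^c`, one has `μⁿ + μ⁻ⁿ - 2 = μⁿ (1 - μ⁻ⁿ)²`, so `log ((μⁿ + μ⁻ⁿ - 2) / K²) / n → log μ`.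
Taking logarithms in the defining equation `Aₙ = Bₙ ^ bₙ` gives `bₙ = log Aₙ / log Bₙ`, and after
dividing numerator and denominator by `n` these tend to `a log λ` and `log λ`.
-/

theorem tendsto_log_div_natCast_of_tendsto_div_pow {u : ℕ → ℝ} {μ L : ℝ} (hμ : 0 < μ)
    (hL : 0 < L) (hu : Tendsto (fun n ↦ u n / μ ^ n) atTop (𝓝 L)) :
    Tendsto (fun n ↦ log (u n) / n) atTop (𝓝 (log μ)) := by
  have hlog : Tendsto (fun n ↦ log (u n / μ ^ n)) atTop (𝓝 (log L)) :=
    (continuousAt_log hL.ne').tendsto.comp hu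
  have hsum : Tendsto (fun n : ℕ ↦ log μ + log (u n / μ ^ n) * (n : ℝ)⁻¹) atTop
      (𝓝 (log μ)) := by
    simpa using tendsto_const_nhds.add (hlog.mul tendsto_inv_atTop_nhds_zero_nat)
  refine hsum.congr' ?_
  filter_upwards [hu.eventually (lt_mem_nhds hL), eventually_ne_atTop 0] with n hpos hn
  have hμn : 0 < μ ^ n := pow_pos hμ n
  have hun : 0 < u n := by simpa [hμn] using mul_pos hpos hμn
  rw [log_div hun.ne' hμn.ne', log_pow]
  field_simp
  ring

theorem tendsto_log_pow_add_inv_sub_two_div_natCast {μ K : ℝ} (hμ : 1 < μ) (hK : K ≠ 0) :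
    Tendsto (fun n : ℕ ↦ log ((μ ^ n + (μ ^ n)⁻¹ - 2) / K ^ 2) / n) atTop (𝓝 (log μ)) := by
  refine tendsto_log_div_natCast_of_tendsto_div_pow (L := (1 - 0) ^ 2 / K ^ 2) (by linarith)
    (by positivity) ?_
  have hinv : Tendsto (fun n : ℕ ↦ μ⁻¹ ^ n) atTop (𝓝 0) :=
    tendsto_pow_atTop_nhds_zero_of_lt_one (by positivity) (inv_lt_one_of_one_lt₀ hμ)
  refine (((tendsto_const_nhds.sub hinv).pow 2).div_const _).congr fun n ↦ ?_
  have : μ ^ n ≠ 0 := by positivity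
  rw [inv_pow]
  field_simp
  ring

/-- Let `λ > 1`, `a ≥ 1`, and `N, N'` nonzero reals. If for all large `n`
the exponent `bₙ` satisfies `(λ^(an) + λ^(-an) - 2)/(N')² = ((λ^n + λ^(-n) - 2)/N²)^(bₙ)`
(both sides exceeding `1`), then `bₙ → a`. -/
theorem tendsto_exponents_of_translation_vectors (lam a N N' : ℝ) (b : ℕ → ℝ)
    (hlam : 1 < lam) (ha : 1 ≤ a) (hN : N ≠ 0) (hN' : N' ≠ 0)
    (h : ∃ n₀ : ℕ, ∀ n : ℕ, n₀ ≤ n →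
      1 < (lam ^ (a * n) + lam ^ (-(a * n)) - 2) / N' ^ 2 ∧
      1 < (lam ^ (n : ℝ) + lam ^ (-(n : ℝ)) - 2) / N ^ 2 ∧
      (lam ^ (a * n) + lam ^ (-(a * n)) - 2) / N' ^ 2 =
        ((lam ^ (n : ℝ) + lam ^ (-(n : ℝ)) - 2) / N ^ 2) ^ (b n)) :
    Tendsto b atTop (nhds a) := by
  obtain ⟨n₀, hn₀⟩ := h
  have hlam0 : 0 < lam := by linarith
  have hloglam : log lam ≠ 0 := (log_pos hlam).ne'
  have hnum := tendsto_log_pow_add_inv_sub_two_div_natCast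
    (one_lt_rpow hlam (by linarith : 0 < a)) hN'
  have hden := tendsto_log_pow_add_inv_sub_two_div_natCast hlam hN
  rw [log_rpow hlam0] at hnum
  have hratio := hnum.div hden hloglam
  rw [mul_div_cancel_right₀ _ hloglam] at hratio
  refine hratio.congr' ?_
  filter_upwards [eventually_ge_atTop n₀, eventually_ne_atTop 0] with n hn hn0
  obtain ⟨-, hden_gt, heq⟩ := hn₀ n hn
  have hlogB : 0 < log ((lam ^ (n : ℝ) + lam ^ (-(n : ℝ)) - 2) / N ^ 2) := log_pos hden_gt
  have hlogA := congrArg log heq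
  rw [log_rpow (by linarith)] at hlogA
  simp only [rpow_neg hlam0.le, rpow_natCast, rpow_mul hlam0.le] at hlogA hlogB
  rw [Pi.div_apply, hlogA, div_div_div_cancel_right₀ (Nat.cast_ne_zero.mpr hn0),
    mul_div_cancel_right₀ _ hlogB.ne']
end
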